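/- (Key estimate for the generalized operators of Section 4) Let n ≥ 1 be a natural number, 0 < q < p ≤ 1, γ ≥ 0, c_n > 0, and for 0 ≤ k ≤ n put b_{n,k} = c_n − p^{n−k+1}[k]_{p,q}, assuming b_{n,k} > 0 for all k. Define L_n^{(p,q),γ}(f;x) = (pq/ℓ_n^{p,q}(x)) Σ_{k=0}^{n} f( (p^{n−k+1}[k]_{p,q} + γ)/b_{n,k} ) p^{(n−k)(n−k−1)/2} q^{k(k−1)/2} [n choose k]_{p,q} x^k. Then for every 0 < α ≤ 1, M > 0, every f ∈ W̃_{α,[0,∞)} with constant M and every x ≥ 0, | L_n^{(p,q),γ}(f;x) − L_n^{p,q}(f;x) | ≤ M·( γ/(c_n + γ) )^α + M·| 1 − [n+1]_{p,q}/(c_n + γ) |^α · L_n^{p,q}( (t/(1+t))^α; x ). -/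

import Mathlib

open Finset Filter
open scoped Classical

noncomputable section

/-- The `(p,q)`-integer `[n]_{p,q} = (p^n - q^n)/(p - q)`. -/
def pqInt (p q : ℝ) (n : ℕ) : ℝ := (p ^ n - q ^ n) / (p - q)

/-- The `(p,q)`-factorial. -/
def pqFact (p q : ℝ) : ℕ → ℝ
  | 0 => 1
  | n + 1 => pqFact p q n * pqInt p q (n + 1)

/-- The `(p,q)`-binomial coefficient. -/
def pqBinom (p q : ℝ) (n k : ℕ) : ℝ :=
  pqFact p q n / (pqFact p q k * pqFact p q (n - k))

/-- `ℓ_n^{p,q}(x) = ∏_{s=0}^{n-1} (p^s + q^s x)`. -/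
def pqEll (p q : ℝ) (n : ℕ) (x : ℝ) : ℝ :=
  ∏ s ∈ Finset.range n, (p ^ s + q ^ s * x)

/-- The node `p^{n-k+1}[k]_{p,q} / ([n-k+1]_{p,q} q^k)`. -/
def pqNode (p q : ℝ) (n k : ℕ) : ℝ :=
  p ^ (n - k + 1) * pqInt p q k / (pqInt p q (n - k + 1) * q ^ k)

/-- The `(p,q)`-Bleimann–Butzer–Hahn operator. -/
def bbh (p q : ℝ) (n : ℕ) (f : ℝ → ℝ) (x : ℝ) : ℝ :=
  (p * q / pqEll p q n x) *
    ∑ k ∈ Finset.range (n + 1),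
      f (pqNode p q n k) * p ^ ((n - k) * (n - k - 1) / 2) *
        q ^ (k * (k - 1) / 2) * pqBinom p q n k * x ^ k

/-- `δ_n(x)` from Theorem 3.1. -/
def pqDelta (p q : ℝ) (n : ℕ) (x : ℝ) : ℝ :=
  (x / (1 + x)) ^ 2 *
      (p ^ 2 * q ^ 3 * pqInt p q n * pqInt p q (n - 1) / (pqInt p q (n + 1)) ^ 2 *
          ((1 + x) / (p + q * x)) -
        2 * p * q * pqInt p q n / pqInt p q (n + 1) + 1) +
    p ^ (n + 2) * q * pqInt p q n / (pqInt p q (n + 1)) ^ 2 * (x / (1 + x))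

/-- Statistical convergence of a real sequence. -/
def StatConv (a : ℕ → ℝ) (l : ℝ) : Prop :=
  ∀ ε > (0 : ℝ), Tendsto (fun n : ℕ =>
    (((Finset.range (n + 1)).filter (fun k => ε ≤ |a k - l|)).card : ℝ) / n)
    atTop (nhds 0)

/-- A modulus of continuity. -/
def IsModulus (ω : ℝ → ℝ) : Prop :=
  (∀ δ, 0 ≤ δ → 0 ≤ ω δ) ∧
  (∀ δ₁ δ₂, 0 ≤ δ₁ → δ₁ ≤ δ₂ → ω δ₁ ≤ ω δ₂) ∧
  (∀ δ₁ δ₂, 0 ≤ δ₁ → 0 ≤ δ₂ → ω (δ₁ + δ₂) ≤ ω δ₁ + ω δ₂) ∧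
  Tendsto ω (nhdsWithin 0 (Set.Ioi 0)) (nhds 0)

/-- Membership in the class `H_ω`. -/
def MemHomega (ω f : ℝ → ℝ) : Prop :=
  ∀ x y : ℝ, 0 ≤ x → 0 ≤ y → |f x - f y| ≤ ω |x / (1 + x) - y / (1 + y)|

/-- The modulus `ω̃(f; δ)`. -/
def omegaTilde (f : ℝ → ℝ) (δ : ℝ) : ℝ :=
  sSup {d | ∃ t x : ℝ, 0 ≤ t ∧ 0 ≤ x ∧ |t / (1 + t) - x / (1 + x)| ≤ δ ∧ d = |f t - f x|}

/-- The bivariate `(p,q)`-Bleimann–Butzer–Hahn operator. -/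
def bbh2 (p₁ p₂ q₁ q₂ : ℝ) (n₁ n₂ : ℕ) (f : ℝ → ℝ → ℝ) (x y : ℝ) : ℝ :=
  (p₁ * p₂ * q₁ * q₂ / (pqEll p₁ q₁ n₁ x * pqEll p₂ q₂ n₂ y)) *
    ∑ k₁ ∈ Finset.range (n₁ + 1), ∑ k₂ ∈ Finset.range (n₂ + 1),
      f (pqNode p₁ q₁ n₁ k₁) (pqNode p₂ q₂ n₂ k₂) *
        p₁ ^ ((n₁ - k₁) * (n₁ - k₁ - 1) / 2) * q₁ ^ (k₁ * (k₁ - 1) / 2) *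
        p₂ ^ ((n₂ - k₂) * (n₂ - k₂ - 1) / 2) * q₂ ^ (k₂ * (k₂ - 1) / 2) *
        pqBinom p₁ q₁ n₁ k₁ * pqBinom p₂ q₂ n₂ k₂ * x ^ k₁ * y ^ k₂

/-- Statistical convergence of a double real sequence (Pringsheim sense). -/
def StatConv2 (a : ℕ → ℕ → ℝ) (l : ℝ) : Prop :=
  ∀ ε > (0 : ℝ), Tendsto (fun N : ℕ × ℕ =>
    ((((Finset.range (N.1 + 1)) ×ˢ (Finset.range (N.2 + 1))).filter
        (fun jk => ε ≤ |a jk.1 jk.2 - l|)).card : ℝ) / (N.1 * N.2))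
    atTop (nhds 0)

/-- A bivariate modulus of continuity. -/
def IsModulus2 (ω : ℝ → ℝ → ℝ) : Prop :=
  (∀ a b, 0 ≤ a → 0 ≤ b → 0 ≤ ω a b) ∧
  (∀ a a' b, 0 ≤ a → a ≤ a' → 0 ≤ b → ω a b ≤ ω a' b) ∧
  (∀ a b b', 0 ≤ a → 0 ≤ b → b ≤ b' → ω a b ≤ ω a b') ∧
  (∀ a a' b, 0 ≤ a → 0 ≤ a' → 0 ≤ b → ω (a + a') b ≤ ω a b + ω a' b) ∧
  (∀ a b b', 0 ≤ a → 0 ≤ b → 0 ≤ b' → ω a (b + b') ≤ ω a b + ω a b') ∧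
  Tendsto (fun d : ℝ × ℝ => ω d.1 d.2)
    (nhdsWithin (0, 0) (Set.Ioi 0 ×ˢ Set.Ioi 0)) (nhds 0)

/-- Membership in the class `H_{ω₂}`. -/
def MemHomega2 (ω g : ℝ → ℝ → ℝ) : Prop :=
  ∀ u₁ v₁ u₂ v₂ : ℝ, 0 ≤ u₁ → 0 ≤ v₁ → 0 ≤ u₂ → 0 ≤ v₂ →
    |g u₁ v₁ - g u₂ v₂| ≤
      ω |u₁ / (1 + u₁) - u₂ / (1 + u₂)| |v₁ / (1 + v₁) - v₂ / (1 + v₂)|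

/-- The bivariate modulus `ω̃(g; δ₁, δ₂)`. -/
def omegaTilde2 (g : ℝ → ℝ → ℝ) (δ₁ δ₂ : ℝ) : ℝ :=
  sSup {d | ∃ t s x y : ℝ, 0 ≤ t ∧ 0 ≤ s ∧ 0 ≤ x ∧ 0 ≤ y ∧
    |t / (1 + t) - x / (1 + x)| ≤ δ₁ ∧ |s / (1 + s) - y / (1 + y)| ≤ δ₂ ∧
    d = |g t s - g x y|}

/-!
Both operators average over the same nonnegative weights, which add up to `ℓ_n^{p,q}(x)` by the
`(p,q)`-binomial theorem. Under `t ↦ t/(1+t)` the generalized node `(a+γ)/(c-a)` becomes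
`(a+γ)/(c+γ)`, and the ordinary node `a/D` becomes `a/[n+1]_{p,q}` because `a + D = [n+1]_{p,q}`.
The difference of the two images is `γ/(c+γ) - (a/[n+1]_{p,q}) (1 - [n+1]_{p,q}/(c+γ))`, so the
Hölder condition and the subadditivity of `u ↦ u^α` bound each summand; the remaining factor `pq`
of the constant term is at most `1`.
-/

section PQCalculus

variable {p q : ℝ}

theorem pqInt_add (hpq : p ≠ q) (a b : ℕ) :
    pqInt p q (a + b) = p ^ a * pqInt p q b + q ^ b * pqInt p q a := by
  have := sub_ne_zero.2 hpq
  unfold pqInt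
  field_simp
  ring

variable (hq : 0 ≤ q) (hqp : q < p)
include hq hqp

theorem pqInt_pos {n : ℕ} (hn : n ≠ 0) : 0 < pqInt p q n :=
  div_pos (sub_pos.2 (pow_lt_pow_left₀ hqp hq hn)) (sub_pos.2 hqp)

theorem pqInt_nonneg (n : ℕ) : 0 ≤ pqInt p q n := by
  rcases n.eq_zero_or_pos with rfl | hn
  · simp [pqInt]
  · exact (pqInt_pos hq hqp hn.ne').le

theorem pqFact_pos (n : ℕ) : 0 < pqFact p q n := by
  induction n with
  | zero => exact one_pos
  | succ m ih => exact mul_pos ih (pqInt_pos hq hqp m.succ_ne_zero)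

theorem pqBinom_pos (n k : ℕ) : 0 < pqBinom p q n k :=
  div_pos (pqFact_pos hq hqp n) (mul_pos (pqFact_pos hq hqp k) (pqFact_pos hq hqp _))

theorem pqBinom_zero_right (n : ℕ) : pqBinom p q n 0 = 1 := by
  simp [pqBinom, pqFact, (pqFact_pos hq hqp n).ne']

theorem pqBinom_self (n : ℕ) : pqBinom p q n n = 1 := by
  simp [pqBinom, pqFact, (pqFact_pos hq hqp n).ne']

theorem pqBinom_succ_succ {n k : ℕ} (hk : k < n) :
    pqBinom p q (n + 1) (k + 1) =
      p ^ (k + 1) * pqBinom p q n (k + 1) + q ^ (n - k) * pqBinom p q n k := by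
  obtain ⟨b, rfl⟩ : ∃ b, n = k + b + 1 := ⟨n - k - 1, by omega⟩
  have hsplit : pqInt p q (k + b + 1 + 1) =
      p ^ (k + 1) * pqInt p q (b + 1) + q ^ (b + 1) * pqInt p q (k + 1) := by
    rw [← pqInt_add hqp.ne']; ring_nf
  have := pqFact_pos hq hqp k
  have := pqFact_pos hq hqp b
  have := pqFact_pos hq hqp (k + b + 1)
  have := pqInt_pos hq hqp k.succ_ne_zero
  have := pqInt_pos hq hqp b.succ_ne_zero
  have hfact_n : pqFact p q (k + b + 1 + 1) = pqFact p q (k + b + 1) * pqInt p q (k + b + 1 + 1) :=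
    rfl
  have hfact_k : pqFact p q (k + 1) = pqFact p q k * pqInt p q (k + 1) := rfl
  have hfact_b : pqFact p q (b + 1) = pqFact p q b * pqInt p q (b + 1) := rfl
  simp only [pqBinom, show k + b + 1 + 1 - (k + 1) = b + 1 by omega,
    show k + b + 1 - (k + 1) = b by omega, show k + b + 1 - k = b + 1 by omega]
  rw [hfact_n, hfact_k, hfact_b, hsplit]
  field_simp

end PQCalculus

def pqWeight (p q : ℝ) (n k : ℕ) (x : ℝ) : ℝ :=
  p ^ ((n - k) * (n - k - 1) / 2) * q ^ (k * (k - 1) / 2) * pqBinom p q n k * x ^ k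

section PQWeight

variable {p q : ℝ}

theorem sum_mul_pqWeight (F : ℕ → ℝ) (n : ℕ) (x : ℝ) :
    ∑ k ∈ range (n + 1),
        F k * p ^ ((n - k) * (n - k - 1) / 2) * q ^ (k * (k - 1) / 2) * pqBinom p q n k * x ^ k =
      ∑ k ∈ range (n + 1), F k * pqWeight p q n k x := by
  simp only [pqWeight, mul_assoc]

theorem bbh_eq_sum_pqWeight (n : ℕ) (f : ℝ → ℝ) (x : ℝ) :
    bbh p q n f x =
      p * q / pqEll p q n x * ∑ k ∈ range (n + 1), f (pqNode p q n k) * pqWeight p q n k x := by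
  rw [bbh, sum_mul_pqWeight]

variable (hq : 0 ≤ q) (hqp : q < p)
include hq hqp

theorem pqWeight_nonneg (n k : ℕ) {x : ℝ} (hx : 0 ≤ x) : 0 ≤ pqWeight p q n k x := by
  have := pqBinom_pos hq hqp n k
  have := hq.trans_lt hqp
  unfold pqWeight
  positivity

theorem pqWeight_succ_zero (n : ℕ) (x : ℝ) :
    pqWeight p q (n + 1) 0 x = p ^ n * pqWeight p q n 0 x := by
  simp only [pqWeight, pqBinom_zero_right hq hqp, Nat.sub_zero, Nat.add_sub_cancel,
    show (n + 1) * n / 2 = n * (n - 1) / 2 + n by simpa using Nat.triangle_succ n]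
  ring

theorem pqWeight_succ_self (n : ℕ) (x : ℝ) :
    pqWeight p q (n + 1) (n + 1) x = q ^ n * x * pqWeight p q n n x := by
  simp only [pqWeight, pqBinom_self hq hqp, Nat.sub_self, Nat.add_sub_cancel,
    show (n + 1) * n / 2 = n * (n - 1) / 2 + n by simpa using Nat.triangle_succ n]
  ring

theorem pqWeight_succ_succ {n k : ℕ} (hk : k < n) (x : ℝ) :
    pqWeight p q (n + 1) (k + 1) x =
      p ^ n * pqWeight p q n (k + 1) x + q ^ n * x * pqWeight p q n k x := by
  obtain ⟨b, rfl⟩ : ∃ b, n = k + b + 1 := ⟨n - k - 1, by omega⟩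
  rw [pqWeight, pqWeight, pqWeight, pqBinom_succ_succ hq hqp hk,
    show k + b + 1 + 1 - (k + 1) = b + 1 by omega, show k + b + 1 - (k + 1) = b by omega,
    show k + b + 1 - k = b + 1 by omega, Nat.add_sub_cancel, Nat.add_sub_cancel,
    show (b + 1) * b / 2 = b * (b - 1) / 2 + b by simpa using Nat.triangle_succ b,
    show (k + 1) * k / 2 = k * (k - 1) / 2 + k by simpa using Nat.triangle_succ k]
  ring

/-- The `(p,q)`-binomial theorem. -/
theorem sum_pqWeight (n : ℕ) (x : ℝ) :
    ∑ k ∈ range (n + 1), pqWeight p q n k x = pqEll p q n x := by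
  induction n with
  | zero => simp [pqWeight, pqEll, pqBinom_zero_right hq hqp]
  | succ n ih =>
    have hfirst := sum_range_succ' (fun k => pqWeight p q n k x) n
    have hlast := sum_range_succ (fun k => pqWeight p q n k x) n
    rw [pqEll, prod_range_succ, ← pqEll, ← ih, sum_range_succ, sum_range_succ',
      pqWeight_succ_self hq hqp, pqWeight_succ_zero hq hqp,
      sum_congr rfl fun k hk => pqWeight_succ_succ hq hqp (mem_range.1 hk) x,
      sum_add_distrib, ← mul_sum, ← mul_sum]
    linear_combination (-p ^ n) * hfirst - q ^ n * x * hlast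

end PQWeight

theorem abs_sub_mul_rpow_le {u r w α : ℝ} (hu : 0 ≤ u) (hr : 0 ≤ r) (hα0 : 0 ≤ α)
    (hα1 : α ≤ 1) : |u - r * w| ^ α ≤ u ^ α + r ^ α * |w| ^ α := by
  have htri : |u - r * w| ≤ u + r * |w| := by
    simpa [abs_of_nonneg hu, abs_mul, abs_of_nonneg hr] using abs_sub u (r * w)
  calc |u - r * w| ^ α ≤ (u + r * |w|) ^ α := Real.rpow_le_rpow (abs_nonneg _) htri hα0
    _ ≤ u ^ α + (r * |w|) ^ α :=
      Real.rpow_add_le_add_rpow hu (mul_nonneg hr (abs_nonneg w)) hα0 hα1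
    _ = u ^ α + r ^ α * |w| ^ α := by rw [Real.mul_rpow hr (abs_nonneg w)]

theorem div_div_one_add_div {u v : ℝ} (hu : 0 ≤ u) (hv : 0 < v) :
    u / v / (1 + u / v) = u / (u + v) := by
  field_simp
  ring

/-- `(a+γ)/(c-a)` is a node of the generalized operator and `a/D` the corresponding node of
`L_n^{p,q}`. -/
theorem abs_sub_le_of_ratio_holder {f : ℝ → ℝ} {M α : ℝ} (hM : 0 ≤ M) (hα0 : 0 ≤ α)
    (hα1 : α ≤ 1)
    (hf : ∀ t : ℝ, 0 ≤ t → ∀ y : ℝ, 0 ≤ y → |f t - f y| ≤ M * |t / (1 + t) - y / (1 + y)| ^ α)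
    {a γ c D : ℝ} (ha : 0 ≤ a) (hγ : 0 ≤ γ) (hac : a < c) (hD : 0 < D) :
    |f ((a + γ) / (c - a)) - f (a / D)| ≤
      M * (γ / (c + γ)) ^ α + M * |1 - (a + D) / (c + γ)| ^ α * (a / D / (1 + a / D)) ^ α := by
  have hcγ : 0 < c + γ := by linarith
  have hgen : (a + γ) / (c - a) / (1 + (a + γ) / (c - a)) = (a + γ) / (c + γ) := by
    rw [div_div_one_add_div (by positivity) (sub_pos.2 hac)]; ring_nf
  have hnode : a / D / (1 + a / D) = a / (a + D) := div_div_one_add_div ha hD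
  have hdiff : (a + γ) / (c + γ) - a / (a + D) =
      γ / (c + γ) - a / (a + D) * (1 - (a + D) / (c + γ)) := by
    field_simp
    ring
  calc |f ((a + γ) / (c - a)) - f (a / D)|
      ≤ M * |(a + γ) / (c + γ) - a / (a + D)| ^ α := by
        simpa only [hgen, hnode] using
          hf ((a + γ) / (c - a)) (div_nonneg (by positivity) (sub_pos.2 hac).le) (a / D)
            (div_nonneg ha hD.le)
    _ ≤ M * ((γ / (c + γ)) ^ α + (a / (a + D)) ^ α * |1 - (a + D) / (c + γ)| ^ α) := by
        rw [hdiff]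
        gcongr
        exact abs_sub_mul_rpow_le (by positivity) (by positivity) hα0 hα1
    _ = _ := by rw [hnode]; ring

theorem abs_mul_sum_sub_mul_sum_le {ι : Type*} (s : Finset ι) {F G H w : ι → ℝ} {κ A B : ℝ}
    (hw : ∀ i ∈ s, 0 ≤ w i) (hκ : 0 ≤ κ) (hκw : κ * ∑ i ∈ s, w i ≤ 1) (hA : 0 ≤ A)
    (hFG : ∀ i ∈ s, |F i - G i| ≤ A + B * H i) :
    |κ * ∑ i ∈ s, F i * w i - κ * ∑ i ∈ s, G i * w i| ≤ A + B * (κ * ∑ i ∈ s, H i * w i) := by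
  have hsum : |∑ i ∈ s, (F i - G i) * w i| ≤ ∑ i ∈ s, (A + B * H i) * w i := by
    refine (abs_sum_le_sum_abs _ _).trans (sum_le_sum fun i hi => ?_)
    rw [abs_mul, abs_of_nonneg (hw i hi)]
    exact mul_le_mul_of_nonneg_right (hFG i hi) (hw i hi)
  calc |κ * ∑ i ∈ s, F i * w i - κ * ∑ i ∈ s, G i * w i|
      = κ * |∑ i ∈ s, (F i - G i) * w i| := by
        rw [← mul_sub, ← sum_sub_distrib, abs_mul, abs_of_nonneg hκ]
        simp only [sub_mul]
    _ ≤ κ * ∑ i ∈ s, (A + B * H i) * w i := mul_le_mul_of_nonneg_left hsum hκ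
    _ = A * (κ * ∑ i ∈ s, w i) + B * (κ * ∑ i ∈ s, H i * w i) := by
        simp only [add_mul, sum_add_distrib, ← mul_sum, mul_assoc]
        ring
    _ ≤ A + B * (κ * ∑ i ∈ s, H i * w i) := by linarith [mul_le_of_le_one_right hA hκw]

theorem bbh_generalized_estimate_general (n : ℕ) (p q : ℝ)
    (hq : 0 < q) (hqp : q < p) (hp : p ≤ 1)
    (γ : ℝ) (hγ : 0 ≤ γ) (c : ℝ)
    (hb : ∀ k ≤ n, 0 < c - p ^ (n - k + 1) * pqInt p q k)
    (α : ℝ) (hα0 : 0 < α) (hα1 : α ≤ 1) (M : ℝ) (hM : 0 < M)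
    (f : ℝ → ℝ)
    (hf : ∀ t : ℝ, 0 ≤ t → ∀ y : ℝ, 0 ≤ y →
      |f t - f y| ≤ M * |t / (1 + t) - y / (1 + y)| ^ α)
    (x : ℝ) (hx : 0 ≤ x) :
    |(p * q / pqEll p q n x) *
          (∑ k ∈ Finset.range (n + 1),
            f ((p ^ (n - k + 1) * pqInt p q k + γ) /
                (c - p ^ (n - k + 1) * pqInt p q k)) *
              p ^ ((n - k) * (n - k - 1) / 2) * q ^ (k * (k - 1) / 2) *
              pqBinom p q n k * x ^ k) -
        bbh p q n f x| ≤
      M * (γ / (c + γ)) ^ α +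
        M * |1 - pqInt p q (n + 1) / (c + γ)| ^ α *
          bbh p q n (fun t => (t / (1 + t)) ^ α) x := by
  have hp0 : 0 < p := hq.trans hqp
  have hc : 0 < c := by simpa [pqInt] using hb 0 n.zero_le
  have hℓ : 0 < pqEll p q n x := prod_pos fun s _ => by positivity
  rw [sum_mul_pqWeight, bbh_eq_sum_pqWeight, bbh_eq_sum_pqWeight]
  refine abs_mul_sum_sub_mul_sum_le _ (fun k _ => pqWeight_nonneg hq.le hqp n k hx)
    (by positivity) ?_ (by positivity) fun k hk => ?_
  · rw [sum_pqWeight hq.le hqp, div_mul_cancel₀ _ hℓ.ne']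
    exact mul_le_one₀ hp hq.le (hqp.le.trans hp)
  · have hkn : k ≤ n := Nat.lt_succ_iff.1 (mem_range.1 hk)
    have hsum : p ^ (n - k + 1) * pqInt p q k + pqInt p q (n - k + 1) * q ^ k =
        pqInt p q (n + 1) := by
      rw [show n + 1 = n - k + 1 + k by omega, pqInt_add hqp.ne' (n - k + 1) k]
      ring
    have hnode := abs_sub_le_of_ratio_holder hM.le hα0.le hα1 hf
      (mul_nonneg (by positivity) (pqInt_nonneg hq.le hqp k)) hγ (sub_pos.1 (hb k hkn))
      (mul_pos (pqInt_pos hq.le hqp (n - k).succ_ne_zero) (pow_pos hq k))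
    rwa [hsum] at hnode

/-- key estimate for the generalized operators of Section 4. -/
theorem bbh_generalized_estimate (n : ℕ) (hn : 1 ≤ n) (p q : ℝ)
    (hq : 0 < q) (hqp : q < p) (hp : p ≤ 1)
    (γ : ℝ) (hγ : 0 ≤ γ) (c : ℝ) (hc : 0 < c)
    (hb : ∀ k ≤ n, 0 < c - p ^ (n - k + 1) * pqInt p q k)
    (α : ℝ) (hα0 : 0 < α) (hα1 : α ≤ 1) (M : ℝ) (hM : 0 < M)
    (f : ℝ → ℝ)
    (hfb : ∃ C : ℝ, ∀ t : ℝ, 0 ≤ t → |f t| ≤ C)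
    (hfc : ContinuousOn f (Set.Ici 0))
    (hf : ∀ t : ℝ, 0 ≤ t → ∀ y : ℝ, 0 ≤ y →
      |f t - f y| ≤ M * |t / (1 + t) - y / (1 + y)| ^ α)
    (x : ℝ) (hx : 0 ≤ x) :
    |(p * q / pqEll p q n x) *
          (∑ k ∈ Finset.range (n + 1),
            f ((p ^ (n - k + 1) * pqInt p q k + γ) /
                (c - p ^ (n - k + 1) * pqInt p q k)) *
              p ^ ((n - k) * (n - k - 1) / 2) * q ^ (k * (k - 1) / 2) *
              pqBinom p q n k * x ^ k) -
        bbh p q n f x| ≤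
      M * (γ / (c + γ)) ^ α +
        M * |1 - pqInt p q (n + 1) / (c + γ)| ^ α *
          bbh p q n (fun t => (t / (1 + t)) ^ α) x :=
  bbh_generalized_estimate_general n p q hq hqp hp γ hγ c hb α hα0 hα1 M hM f hf x hx
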